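/- For every real a with 0 < a ≤ 0.179, one has h₁(a) ≥ 0.85, where h₁(a) = (1 - (2·arccos(a) + arccos(2a-1))/(2π))/a. -/

import Mathlib

/-!
Since `arcsin a ≥ a`, we have `arccos a ≤ π/2 - a`; since `cos t ≥ 1 - t²/2` at `t = 2√a`, we have
`arccos (1 - 2a) ≥ 2√a`, i.e. `arccos (2a - 1) ≤ π - 2√a`. Together these give
`h₁ a ≥ (1 + 1/√a)/π`, which for `a ≤ 0.179` exceeds `(1 + 1/0.424)/π > 0.85`.
-/

/-- `h₁(a) = (1 - (2·arccos a + arccos(2a-1))/(2π))/a`. -/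
noncomputable def h₁ (a : ℝ) : ℝ :=
  (1 - (2 * Real.arccos a + Real.arccos (2 * a - 1)) / (2 * Real.pi)) / a

open Real

namespace Real

lemma self_le_arcsin {x : ℝ} (hx₀ : 0 ≤ x) (hx₁ : x ≤ 1) : x ≤ arcsin x := by
  simpa [sin_arcsin (by linarith) hx₁] using sin_le (arcsin_nonneg.mpr hx₀)

lemma arccos_le_pi_div_two_sub_self {x : ℝ} (hx₀ : 0 ≤ x) (hx₁ : x ≤ 1) :
    arccos x ≤ π / 2 - x := by
  rw [arccos]
  linarith [self_le_arcsin hx₀ hx₁]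

lemma two_mul_sqrt_le_arccos_one_sub_two_mul {a : ℝ} (ha₀ : 0 ≤ a) (ha₁ : a ≤ 1) :
    2 * √a ≤ arccos (1 - 2 * a) := by
  have hcos : 1 - 2 * a ≤ cos (2 * √a) := by
    have := one_sub_sq_div_two_le_cos (x := 2 * √a)
    rw [mul_pow, sq_sqrt ha₀] at this
    linarith
  have hle : 2 * √a ≤ π := by linarith [sqrt_le_one.mpr ha₁, pi_gt_three]
  calc 2 * √a = arccos (cos (2 * √a)) := (arccos_cos (by positivity) hle).symm
    _ ≤ arccos (1 - 2 * a) := arccos_le_arccos hcos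

lemma arccos_two_mul_sub_one_le {a : ℝ} (ha₀ : 0 ≤ a) (ha₁ : a ≤ 1) :
    arccos (2 * a - 1) ≤ π - 2 * √a := by
  rw [show 2 * a - 1 = -(1 - 2 * a) by ring, arccos_neg]
  linarith [two_mul_sqrt_le_arccos_one_sub_two_mul ha₀ ha₁]

end Real

lemma one_add_inv_sqrt_div_pi_le_h₁ {a : ℝ} (ha₀ : 0 < a) (ha₁ : a ≤ 1) :
    (1 + (√a)⁻¹) / π ≤ h₁ a := by
  have hsum : 2 * arccos a + arccos (2 * a - 1) ≤ 2 * π - 2 * a - 2 * √a := by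
    linarith [arccos_le_pi_div_two_sub_self ha₀.le ha₁, arccos_two_mul_sub_one_le ha₀.le ha₁]
  rw [h₁, ← sqrt_div_self, le_div_iff₀ ha₀]
  calc (1 + √a / a) / π * a = 1 - (2 * π - 2 * a - 2 * √a) / (2 * π) := by
        field_simp
        ring
    _ ≤ 1 - (2 * arccos a + arccos (2 * a - 1)) / (2 * π) := by
        gcongr

/-- For `0 < a ≤ 0.179`, `h₁(a) ≥ 0.85`. -/
theorem stmt17 (a : ℝ) (h0 : 0 < a) (h1 : a ≤ (0.179 : ℝ)) : h₁ a ≥ (0.85 : ℝ) := by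
  have hsqrt : √a ≤ 0.424 := sqrt_le_iff.mpr ⟨by norm_num, by norm_num; linarith⟩
  have hinv : (0.424 : ℝ)⁻¹ ≤ (√a)⁻¹ := inv_anti₀ (sqrt_pos.mpr h0) hsqrt
  calc (0.85 : ℝ) ≤ (1 + (√a)⁻¹) / π := by
        rw [le_div_iff₀ pi_pos]
        linarith [pi_lt_d2]
    _ ≤ h₁ a := one_add_inv_sqrt_div_pi_le_h₁ h0 (by linarith)
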